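/- arXiv:1612.02660 — 9 statements merged into one kernel-verified Lean document; each statement's English description precedes it below -/
import Mathlib

section
/- Let 𝒜 be a finite distributive lattice and v an isotone valuation on 𝒜 that is positive on nonzero elements. The relation ≼_v is a partial order on the set A(𝒜) of all acts of 𝒜: it is reflexive (α ≼_v α for every act α); transitive (α ≼_v β and β ≼_v γ imply α ≼_v γ); and antisymmetric (if α : E → ℝ and β : D → ℝ satisfy α ≼_v β and β ≼_v α, then E = D and α = β). -/
variable {A : Type*} [DistribLattice A] [BoundedOrder A]

/-- `E` is an algebraic partition of the bounded distributive lattice `A`: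
its join is `⊤`, distinct elements meet to `⊥`, and `⊥ ∉ E`. -/
def IsPartition (E : Finset A) : Prop :=
  E.sup id = ⊤ ∧ (∀ x ∈ E, ∀ y ∈ E, x ≠ y → x ⊓ y = ⊥) ∧ ⊥ ∉ E

/-- `E` is a refinement of `D`: every element of `E` lies below some element of `D`. -/
def Refines (E D : Finset A) : Prop :=
  ∀ e ∈ E, ∃ d ∈ D, e ≤ d

/-- The preference relation `α ≼_v β` for acts `α : E → ℝ` and `β : D → ℝ`:
`E ≤ D` and for every `e ∈ E`, `α e ≤ β d_e · v e / v d_e` (where `d_e` is the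
unique element of `D` above `e`, expressed by quantifying over all such `d`). -/
def PrefV (v : A → ℝ) (E D : Finset A) (α β : A → ℝ) : Prop :=
  Refines E D ∧ ∀ e ∈ E, ∀ d ∈ D, e ≤ d → α e ≤ β d * v e / v d

lemma part_ne_bot {E : Finset A} (hE : IsPartition E) {e : A} (he : e ∈ E) : e ≠ ⊥ :=
  fun h => hE.2.2 (h ▸ he)

lemma part_le_eq {E : Finset A} (hE : IsPartition E) {e d : A} (he : e ∈ E) (hd : d ∈ E)
    (hed : e ≤ d) : e = d := by
  by_contra h
  have hb := hE.2.1 e he d hd h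
  rw [inf_eq_left.mpr hed] at hb
  exact part_ne_bot hE he hb

lemma refines_subset {E D : Finset A} (hE : IsPartition E) (hED : Refines E D)
    (hDE : Refines D E) : E ⊆ D := by
  intro e he
  obtain ⟨d, hd, hed⟩ := hED e he
  obtain ⟨e', he', hde'⟩ := hDE d hd
  have h1 : e = e' := part_le_eq hE he he' (hed.trans hde')
  have : e = d := le_antisymm hed (h1 ▸ hde')
  exact this ▸ hd

/-- `≼_v` is a partial order on the set of all acts of `A`:
reflexive, transitive, and antisymmetric. -/
theorem stmt_2 [Fintype A] (v : A → ℝ)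
    (hval : ∀ a b : A, v (a ⊔ b) = v a + v b - v (a ⊓ b))
    (hiso : ∀ a b : A, a ≤ b → v a ≤ v b)
    (hpos : ∀ a : A, a ≠ ⊥ → 0 < v a) :
    (∀ (E : Finset A) (α : A → ℝ), IsPartition E → PrefV v E E α α) ∧
    (∀ (E D G : Finset A) (α β γ : A → ℝ),
      IsPartition E → IsPartition D → IsPartition G →
      PrefV v E D α β → PrefV v D G β γ → PrefV v E G α γ) ∧
    (∀ (E D : Finset A) (α β : A → ℝ), IsPartition E → IsPartition D →
      PrefV v E D α β → PrefV v D E β α → E = D ∧ ∀ e ∈ E, α e = β e) := by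
  refine ⟨?_, ?_, ?_⟩
  · intro E α hE
    refine ⟨fun e he => ⟨e, he, le_rfl⟩, fun e he d hd hed => ?_⟩
    have hde : e = d := part_le_eq hE he hd hed
    subst hde
    have hv : 0 < v e := hpos e (part_ne_bot hE he)
    rw [mul_div_assoc, div_self hv.ne', mul_one]
  · intro E D G α β γ hE hD hG hED hDG
    refine ⟨fun e he => ?_, fun e he g hg heg => ?_⟩
    · obtain ⟨d, hd, hed⟩ := hED.1 e he
      obtain ⟨g, hg, hdg⟩ := hDG.1 d hd
      exact ⟨g, hg, hed.trans hdg⟩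
    · obtain ⟨d, hd, hed⟩ := hED.1 e he
      obtain ⟨g', hg', hdg'⟩ := hDG.1 d hd
      have hgg' : g = g' := by
        by_contra h
        have hb := hG.2.1 g hg g' hg' h
        have he' : e ≤ g ⊓ g' := le_inf heg (hed.trans hdg')
        rw [hb, le_bot_iff] at he'
        exact part_ne_bot hE he he'
      subst hgg'
      have h1 := hED.2 e he d hd hed
      have h2 := hDG.2 d hd g hg hdg'
      have hve : (0:ℝ) < v e := hpos e (part_ne_bot hE he)
      have hvd : (0:ℝ) < v d := hpos d (part_ne_bot hD hd)
      have hvg : (0:ℝ) < v g := hpos g (part_ne_bot hG hg)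
      calc α e ≤ β d * v e / v d := h1
        _ ≤ (γ g * v d / v g) * v e / v d := by gcongr
        _ = γ g * v e / v g := by field_simp
  · intro E D α β hE hD hED hDE
    have hEQ : E = D :=
      Finset.Subset.antisymm (refines_subset hE hED.1 hDE.1) (refines_subset hD hDE.1 hED.1)
    subst hEQ
    refine ⟨rfl, fun e he => ?_⟩
    have hv : 0 < v e := hpos e (part_ne_bot hE he)
    have h1 := hED.2 e he e he le_rfl
    have h2 := hDE.2 e he e he le_rfl
    rw [mul_div_assoc, div_self hv.ne', mul_one] at h1 h2
    exact le_antisymm h1 h2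
end

section
/- Let 𝒜 be a finite distributive lattice and v an isotone valuation on 𝒜 that is positive on nonzero elements. Given acts α : E → ℝ and β : D → ℝ, define φ : E ∧ D → ℝ by φ(z) = min(α_{E∧D}(z), β_{E∧D}(z)). Then φ is the greatest lower bound of α and β in (A(𝒜), ≼_v): φ ≼_v α, φ ≼_v β, and every act γ : G → ℝ with γ ≼_v α and γ ≼_v β satisfies γ ≼_v φ. -/
variable {A : Type*} [DistribLattice A] [BoundedOrder A]

/-- The meet `E ∧ D` of two partitions: all nonzero meets `e ⊓ d`. -/
def partMeet [DecidableEq A] (E D : Finset A) : Finset A :=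
  ((E ×ˢ D).image fun p => p.1 ⊓ p.2).filter (fun z => z ≠ ⊥)

lemma mem_partMeet [DecidableEq A] {E D : Finset A} {z : A} :
    z ∈ partMeet E D ↔ (∃ e ∈ E, ∃ d ∈ D, e ⊓ d = z) ∧ z ≠ ⊥ := by
  simp only [partMeet, Finset.mem_filter, Finset.mem_image, Finset.mem_product]
  constructor
  · rintro ⟨⟨⟨e, d⟩, ⟨hE, hD⟩, rfl⟩, hz⟩
    exact ⟨⟨e, hE, d, hD, rfl⟩, hz⟩
  · rintro ⟨⟨e, hE, d, hD, rfl⟩, hz⟩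
    exact ⟨⟨⟨e, d⟩, ⟨hE, hD⟩, rfl⟩, hz⟩

lemma part_unique {E : Finset A} (hE : IsPartition E) {z e e' : A}
    (hz : z ≠ ⊥) (he : e ∈ E) (he' : e' ∈ E) (h1 : z ≤ e) (h2 : z ≤ e') : e = e' := by
  by_contra hne
  exact hz (le_bot_iff.mp (hE.2.1 e he e' he' hne ▸ le_inf h1 h2))

/-- `φ(z) = min(α_{E∧D}(z), β_{E∧D}(z))` is the greatest lower bound of
`α` and `β` in `(A(𝒜), ≼_v)`.  (`φ (e ⊓ d)` is the min of the downgrades, since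
`e` and `d` are the unique elements of `E` resp. `D` above `e ⊓ d`.) -/
theorem stmt_3 [Fintype A] [DecidableEq A] (v : A → ℝ)
    (hval : ∀ a b : A, v (a ⊔ b) = v a + v b - v (a ⊓ b))
    (hiso : ∀ a b : A, a ≤ b → v a ≤ v b)
    (hpos : ∀ a : A, a ≠ ⊥ → 0 < v a)
    (E D : Finset A) (hE : IsPartition E) (hD : IsPartition D)
    (α β φ : A → ℝ)
    (hφ : ∀ e ∈ E, ∀ d ∈ D, e ⊓ d ≠ ⊥ →
      φ (e ⊓ d) = min (α e * v (e ⊓ d) / v e) (β d * v (e ⊓ d) / v d)) :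
    PrefV v (partMeet E D) E φ α ∧ PrefV v (partMeet E D) D φ β ∧
    ∀ (G : Finset A) (γ : A → ℝ), IsPartition G →
      PrefV v G E γ α → PrefV v G D γ β → PrefV v G (partMeet E D) γ φ := by
  refine ⟨⟨?_, ?_⟩, ⟨?_, ?_⟩, ?_⟩
  · rintro z hz
    obtain ⟨⟨e, he, d, hd, rfl⟩, hne⟩ := mem_partMeet.mp hz
    exact ⟨e, he, inf_le_left⟩
  · rintro z hz e' he' hle
    obtain ⟨⟨e, he, d, hd, rfl⟩, hne⟩ := mem_partMeet.mp hz
    obtain rfl := part_unique hE hne he he' inf_le_left hle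
    rw [hφ e he d hd hne]
    exact min_le_left _ _
  · rintro z hz
    obtain ⟨⟨e, he, d, hd, rfl⟩, hne⟩ := mem_partMeet.mp hz
    exact ⟨d, hd, inf_le_right⟩
  · rintro z hz d' hd' hle
    obtain ⟨⟨e, he, d, hd, rfl⟩, hne⟩ := mem_partMeet.mp hz
    obtain rfl := part_unique hD hne hd hd' inf_le_right hle
    rw [hφ e he d hd hne]
    exact min_le_right _ _
  · rintro G γ hG ⟨hGE, hα⟩ ⟨hGD, hβ⟩
    have hGne : ∀ g ∈ G, g ≠ ⊥ := fun g hg h => hG.2.2 (h ▸ hg)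
    refine ⟨?_, ?_⟩
    · rintro g hg
      obtain ⟨e, he, hge⟩ := hGE g hg
      obtain ⟨d, hd, hgd⟩ := hGD g hg
      have hzne : e ⊓ d ≠ ⊥ := fun h =>
        hGne g hg (le_bot_iff.mp (h ▸ le_inf hge hgd))
      exact ⟨e ⊓ d, mem_partMeet.mpr ⟨⟨e, he, d, hd, rfl⟩, hzne⟩, le_inf hge hgd⟩
    · rintro g hg z hz hle
      obtain ⟨⟨e, he, d, hd, rfl⟩, hne⟩ := mem_partMeet.mp hz
      have h1 : γ g ≤ α e * v g / v e := hα g hg e he (hle.trans inf_le_left)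
      have h2 : γ g ≤ β d * v g / v d := hβ g hg d hd (hle.trans inf_le_right)
      rw [hφ e he d hd hne]
      have hvz : 0 < v (e ⊓ d) := hpos _ hne
      have hve : 0 < v e := hpos e (fun h => (hE.2.2) (h ▸ he))
      have hvd : 0 < v d := hpos d (fun h => (hD.2.2) (h ▸ hd))
      have hvg : (0:ℝ) ≤ v g / v (e ⊓ d) :=
        div_nonneg (hpos g (hGne g hg)).le hvz.le
      rw [mul_div_assoc, min_mul_of_nonneg _ _ hvg]
      refine le_min ?_ ?_
      · calc γ g ≤ α e * v g / v e := h1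
          _ = α e * v (e ⊓ d) / v e * (v g / v (e ⊓ d)) := by
              field_simp
      · calc γ g ≤ β d * v g / v d := h2
          _ = β d * v (e ⊓ d) / v d * (v g / v (e ⊓ d)) := by
              field_simp
end

section
/- Let 𝒜 be a finite distributive lattice and v an isotone valuation on 𝒜 that is positive on nonzero elements. Given acts α : E → ℝ and β : D → ℝ, define φ : E ∨ D → ℝ by φ(z) = max(α^{E∨D}(z), β^{E∨D}(z)). Then φ is the least upper bound of α and β in (A(𝒜), ≼_v): α ≼_v φ, β ≼_v φ, and every act γ : G → ℝ with α ≼_v γ and β ≼_v γ satisfies φ ≼_v γ. -/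
variable {A : Type*} [DistribLattice A] [BoundedOrder A]

lemma aux1 {a c p q : ℝ} (hp : 0 < p) (hq : 0 < q) (h : a * q / p ≤ c) :
    a ≤ c * p / q := by
  rw [div_le_iff₀ hp] at h
  rw [le_div_iff₀ hq]
  nlinarith

lemma aux2 {a c px pj pg : ℝ} (hx : 0 < px) (hj : 0 < pj) (hg : 0 < pg)
    (h : a ≤ c * px / pg) : a * pj / px ≤ c * pj / pg := by
  rw [le_div_iff₀ hg] at h
  rw [div_le_div_iff₀ hx hg]
  nlinarith [mul_le_mul_of_nonneg_right h hj.le]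

/-- `φ(z) = max(α^{E∨D}(z), β^{E∨D}(z))` is the least upper bound of
`α` and `β` in `(A(𝒜), ≼_v)`.  Here `J` is the join `E ∨ D` in the refinement
order and `φ` is characterized as the attained maximum of the upgrade values. -/
theorem stmt_4 [Fintype A] (v : A → ℝ)
    (hval : ∀ a b : A, v (a ⊔ b) = v a + v b - v (a ⊓ b))
    (hiso : ∀ a b : A, a ≤ b → v a ≤ v b)
    (hpos : ∀ a : A, a ≠ ⊥ → 0 < v a)
    (E D J : Finset A) (hE : IsPartition E) (hD : IsPartition D) (hJ : IsPartition J)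
    (hEJ : Refines E J) (hDJ : Refines D J)
    (hlub : ∀ Z : Finset A, IsPartition Z → Refines E Z → Refines D Z → Refines J Z)
    (α β φ : A → ℝ)
    (hφ : ∀ z ∈ J,
      ((∃ x ∈ E, x ≤ z ∧ φ z = α x * v z / v x) ∨
        (∃ x ∈ D, x ≤ z ∧ φ z = β x * v z / v x)) ∧
      (∀ x ∈ E, x ≤ z → α x * v z / v x ≤ φ z) ∧
      (∀ x ∈ D, x ≤ z → β x * v z / v x ≤ φ z)) :
    PrefV v E J α φ ∧ PrefV v D J β φ ∧
    ∀ (G : Finset A) (γ : A → ℝ), IsPartition G →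
      PrefV v E G α γ → PrefV v D G β γ → PrefV v J G φ γ := by
  have hvE : ∀ e ∈ E, 0 < v e := fun e he => hpos e (fun h => hE.2.2 (h ▸ he))
  have hvD : ∀ e ∈ D, 0 < v e := fun e he => hpos e (fun h => hD.2.2 (h ▸ he))
  have hvJ : ∀ e ∈ J, 0 < v e := fun e he => hpos e (fun h => hJ.2.2 (h ▸ he))
  refine ⟨⟨hEJ, fun e he j hj hle => ?_⟩, ⟨hDJ, fun e he j hj hle => ?_⟩,
    fun G γ hG hEG hDG => ?_⟩
  · exact aux1 (hvE e he) (hvJ j hj) ((hφ j hj).2.1 e he hle)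
  · exact aux1 (hvD e he) (hvJ j hj) ((hφ j hj).2.2 e he hle)
  · refine ⟨hlub G hG hEG.1 hDG.1, fun j hj g hg hle => ?_⟩
    have hvG : 0 < v g := hpos g (fun h => hG.2.2 (h ▸ hg))
    rcases (hφ j hj).1 with ⟨x, hx, hxj, hφj⟩ | ⟨x, hx, hxj, hφj⟩
    · rw [hφj]
      exact aux2 (hvE x hx) (hvJ j hj) hvG (hEG.2 x hx g hg (hxj.trans hle))
    · rw [hφj]
      exact aux2 (hvD x hx) (hvJ j hj) hvG (hDG.2 x hx g hg (hxj.trans hle))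
end

section
/- Let 𝒜 be a finite distributive lattice, v an isotone valuation on 𝒜 that is positive on nonzero elements, and E an algebraic partition of 𝒜. For all acts α, β : E → ℝ, the pointwise minimum e ↦ min(α(e), β(e)) is the greatest lower bound of α and β in (A(𝒜), ≼_v), and the pointwise maximum e ↦ max(α(e), β(e)) is the least upper bound of α and β in (A(𝒜), ≼_v); hence (A(E), ≼_E) is a sublattice of the lattice (A(𝒜), ≼_v). -/
variable {A : Type*} [DistribLattice A] [BoundedOrder A]

lemma same_part {E : Finset A} (hE : IsPartition E) {e d : A}
    (he : e ∈ E) (hd : d ∈ E) (hle : e ≤ d) : d = e := by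
  by_contra h
  exact hE.2.2 (by rw [← hE.2.1 e he d hd (Ne.symm h), inf_eq_left.mpr hle]; exact he)

/-- For acts `α, β` on the same partition `E`, the pointwise min is the greatest
lower bound and the pointwise max is the least upper bound of `α` and `β`
in `(A(𝒜), ≼_v)`; hence `(A(E), ≼_E)` is a sublattice of `(A(𝒜), ≼_v)`. -/
theorem stmt_5 [Fintype A] (v : A → ℝ)
    (hval : ∀ a b : A, v (a ⊔ b) = v a + v b - v (a ⊓ b))
    (hiso : ∀ a b : A, a ≤ b → v a ≤ v b)
    (hpos : ∀ a : A, a ≠ ⊥ → 0 < v a)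
    (E : Finset A) (hE : IsPartition E) (α β : A → ℝ) :
    (PrefV v E E (fun e => min (α e) (β e)) α ∧
      PrefV v E E (fun e => min (α e) (β e)) β ∧
      ∀ (G : Finset A) (γ : A → ℝ), IsPartition G →
        PrefV v G E γ α → PrefV v G E γ β →
        PrefV v G E γ (fun e => min (α e) (β e))) ∧
    (PrefV v E E α (fun e => max (α e) (β e)) ∧
      PrefV v E E β (fun e => max (α e) (β e)) ∧
      ∀ (G : Finset A) (γ : A → ℝ), IsPartition G →
        PrefV v E G α γ → PrefV v E G β γ →
        PrefV v E G (fun e => max (α e) (β e)) γ) := by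
  have href : Refines E E := fun e he => ⟨e, he, le_rfl⟩
  have hne : ∀ e ∈ E, e ≠ ⊥ := fun e he h => hE.2.2 (h ▸ he)
  have hvpos : ∀ e ∈ E, 0 < v e := fun e he => hpos e (hne e he)
  have hcancel : ∀ e ∈ E, ∀ x : ℝ, x * v e / v e = x := fun e he x => by
    field_simp [(hvpos e he).ne']
  refine ⟨⟨⟨href, ?_⟩, ⟨href, ?_⟩, ?_⟩, ⟨href, ?_⟩, ⟨href, ?_⟩, ?_⟩
  · intro e he d hd hle
    obtain rfl := same_part hE he hd hle
    rw [hcancel d hd]; exact min_le_left _ _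
  · intro e he d hd hle
    obtain rfl := same_part hE he hd hle
    rw [hcancel d hd]; exact min_le_right _ _
  · rintro G γ hG ⟨hGE, hα⟩ ⟨_, hβ⟩
    refine ⟨hGE, fun e he d hd hle => ?_⟩
    have hc : 0 ≤ v e / v d :=
      div_nonneg (hpos e (fun h => hG.2.2 (h ▸ he))).le (hvpos d hd).le
    have h1 := hα e he d hd hle
    have h2 := hβ e he d hd hle
    simp only [mul_div_assoc] at h1 h2 ⊢
    rw [min_mul_of_nonneg _ _ hc]
    exact le_min h1 h2
  · intro e he d hd hle
    obtain rfl := same_part hE he hd hle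
    rw [hcancel d hd]; exact le_max_left _ _
  · intro e he d hd hle
    obtain rfl := same_part hE he hd hle
    rw [hcancel d hd]; exact le_max_right _ _
  · rintro G γ _ ⟨hEG, hα⟩ ⟨_, hβ⟩
    refine ⟨hEG, fun e he d hd hle => ?_⟩
    exact max_le (hα e he d hd hle) (hβ e he d hd hle)
end

section
/- Let 𝒜 be a finite distributive lattice and v an isotone valuation on 𝒜 that is positive on nonzero elements. If β : D → ℝ is an act and E is a partition with E ≤ D, then the downgrade β_E is the least upper bound in (A(𝒜), ≼_v) of the set {ξ ∈ A(E) : ξ ≼_v β}: every ξ ∈ A(E) with ξ ≼_v β satisfies ξ ≼_v β_E, and β_E ≼_v δ for every act δ that is an upper bound of this set. -/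
variable {A : Type*} [DistribLattice A] [BoundedOrder A]

/-- The downgrade `β_E` of `β : D → ℝ` to a refinement `E ≤ D`,
`β_E(e) = β(d_e)·v(e)/v(d_e)`, is the least upper bound in `(A(𝒜), ≼_v)`
of the set of acts on `E` that are `≼_v β`. -/
theorem stmt_6 [Fintype A] (v : A → ℝ)
    (hval : ∀ a b : A, v (a ⊔ b) = v a + v b - v (a ⊓ b))
    (hiso : ∀ a b : A, a ≤ b → v a ≤ v b)
    (hpos : ∀ a : A, a ≠ ⊥ → 0 < v a)
    (E D : Finset A) (hE : IsPartition E) (hD : IsPartition D)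
    (hED : Refines E D) (β βE : A → ℝ)
    (hβE : ∀ e ∈ E, ∀ d ∈ D, e ≤ d → βE e = β d * v e / v d) :
    (∀ ξ : A → ℝ, PrefV v E D ξ β → PrefV v E E ξ βE) ∧
    (∀ (G : Finset A) (δ : A → ℝ), IsPartition G →
      (∀ ξ : A → ℝ, PrefV v E D ξ β → PrefV v E G ξ δ) →
      PrefV v E G βE δ) := by
  constructor
  · rintro ξ ⟨-, hle⟩
    refine ⟨fun e he => ⟨e, he, le_rfl⟩, fun e he d hd hed => ?_⟩
    have hde : d = e := by
      by_contra hne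
      have h := hE.2.1 e he d hd (Ne.symm hne)
      rw [inf_eq_left.mpr hed] at h
      exact hE.2.2 (h ▸ he)
    subst hde
    have hvd : v d ≠ 0 := ne_of_gt (hpos d (fun h => hE.2.2 (h ▸ he)))
    rw [mul_div_assoc, div_self hvd, mul_one]
    obtain ⟨d', hd', hdd'⟩ := hED d he
    rw [hβE d he d' hd' hdd']
    exact hle d he d' hd' hdd'
  · intro G δ hG hub
    exact hub βE ⟨hED, fun e he d hd hed => le_of_eq (hβE e he d hd hed)⟩
end

section
/- Let 𝒜 be a finite distributive lattice and v an isotone valuation on 𝒜 that is positive on nonzero elements. If β : D → ℝ is an act and G is a partition with D ≤ G, then the upgrade β^G is the greatest lower bound in (A(𝒜), ≼_v) of the set {ξ ∈ A(G) : β ≼_v ξ}: every ξ ∈ A(G) with β ≼_v ξ satisfies β^G ≼_v ξ, and δ ≼_v β^G for every act δ that is a lower bound of this set. -/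
variable {A : Type*} [DistribLattice A] [BoundedOrder A]

/-- The upgrade `β^G` of `β : D → ℝ` to a coarsening `D ≤ G`,
`β^G(g) = max {β(x)·v(g)/v(x) : x ∈ D_g}`, is the greatest lower bound in
`(A(𝒜), ≼_v)` of the set of acts on `G` that dominate `β` in `≼_v`.
(`β^G` is characterized as the attained maximum of the relevant values.) -/
theorem stmt_7 [Fintype A] (v : A → ℝ)
    (hval : ∀ a b : A, v (a ⊔ b) = v a + v b - v (a ⊓ b))
    (hiso : ∀ a b : A, a ≤ b → v a ≤ v b)
    (hpos : ∀ a : A, a ≠ ⊥ → 0 < v a)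
    (D G : Finset A) (hD : IsPartition D) (hG : IsPartition G)
    (hDG : Refines D G) (β βG : A → ℝ)
    (hβG : ∀ g ∈ G,
      (∃ x ∈ D, x ≤ g ∧ βG g = β x * v g / v x) ∧
      (∀ x ∈ D, x ≤ g → β x * v g / v x ≤ βG g)) :
    (∀ ξ : A → ℝ, PrefV v D G β ξ → PrefV v G G βG ξ) ∧
    (∀ (Z : Finset A) (δ : A → ℝ), IsPartition Z →
      (∀ ξ : A → ℝ, PrefV v D G β ξ → PrefV v Z G δ ξ) →
      PrefV v Z G δ βG) := by
  obtain ⟨hGsup, hGmeet, hGbot⟩ := hG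
  obtain ⟨hDsup, hDmeet, hDbot⟩ := hD
  have hvG : ∀ g ∈ G, 0 < v g := fun g hg => hpos g (fun h => hGbot (h ▸ hg))
  have hvD : ∀ x ∈ D, 0 < v x := fun x hx => hpos x (fun h => hDbot (h ▸ hx))
  have hGG : ∀ g ∈ G, ∀ g' ∈ G, g ≤ g' → g' = g := by
    intro g hg g' hg' hle
    by_contra hne
    have h0 : g ⊓ g' = ⊥ := hGmeet g hg g' hg' (fun h => hne h.symm)
    rw [inf_eq_left.mpr hle] at h0
    exact hGbot (h0 ▸ hg)
  have hβGdom : PrefV v D G β βG := by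
    refine ⟨hDG, fun x hx g hg hxg => ?_⟩
    have h2 := (hβG g hg).2 x hx hxg
    have hvx := hvD x hx
    have hvg := hvG g hg
    rw [div_le_iff₀ hvx] at h2
    rw [le_div_iff₀ hvg]
    nlinarith
  constructor
  · rintro ξ ⟨hre, hle⟩
    refine ⟨fun g hg => ⟨g, hg, le_rfl⟩, ?_⟩
    intro g hg g' hg' hgg'
    obtain rfl := hGG g hg g' hg' hgg'
    obtain ⟨x, hx, hxg, heq⟩ := (hβG g' hg).1
    have h1 := hle x hx g' hg hxg
    have hvx := hvD x hx
    have hvg := hvG g' hg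
    rw [heq, div_le_div_iff₀ hvx hvg]
    rw [le_div_iff₀ hvg] at h1
    nlinarith
  · intro Z δ hZ h
    exact h βG hβGdom
end

section
/- Let 𝒜 be a finite distributive lattice and v an isotone valuation on 𝒜 that is positive on nonzero elements, and let α : E → ℝ and β : D → ℝ be acts. Then: (1) if E = D, then α ◀ β if and only if α ≼_E β; (2) α ≼_v β implies α ◀ β, and if α ◀ β and E ≤ D then α ≼_v β. -/
variable {A : Type*} [DistribLattice A] [BoundedOrder A]

/-- Properties of the relation `α ◀ β`, defined as `α^{E∨D} ≼_{E∨D} β^{E∨D}`: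
(1) if `E = D` then `α ◀ β ↔ α ≼_E β`; (2) `α ≼_v β` implies `α ◀ β`, and
`α ◀ β` together with `E ≤ D` implies `α ≼_v β`.  Here `J` is the join `E ∨ D`
in the refinement order and `αJ`, `βJ` are the upgrades of `α`, `β` to `J`,
characterized as attained maxima. -/
theorem stmt_9 [Fintype A] (v : A → ℝ)
    (hval : ∀ a b : A, v (a ⊔ b) = v a + v b - v (a ⊓ b))
    (hiso : ∀ a b : A, a ≤ b → v a ≤ v b)
    (hpos : ∀ a : A, a ≠ ⊥ → 0 < v a)
    (E D J : Finset A) (hE : IsPartition E) (hD : IsPartition D) (hJ : IsPartition J)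
    (hEJ : Refines E J) (hDJ : Refines D J)
    (hlub : ∀ Z : Finset A, IsPartition Z → Refines E Z → Refines D Z → Refines J Z)
    (α β αJ βJ : A → ℝ)
    (hαJ : ∀ w ∈ J,
      (∃ x ∈ E, x ≤ w ∧ αJ w = α x * v w / v x) ∧
      (∀ x ∈ E, x ≤ w → α x * v w / v x ≤ αJ w))
    (hβJ : ∀ w ∈ J,
      (∃ x ∈ D, x ≤ w ∧ βJ w = β x * v w / v x) ∧
      (∀ x ∈ D, x ≤ w → β x * v w / v x ≤ βJ w)) :
    (E = D → ((∀ w ∈ J, αJ w ≤ βJ w) ↔ ∀ e ∈ E, α e ≤ β e)) ∧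
    (PrefV v E D α β → ∀ w ∈ J, αJ w ≤ βJ w) ∧
    ((∀ w ∈ J, αJ w ≤ βJ w) → Refines E D → PrefV v E D α β) := by
  have hbot : ∀ (Z : Finset A), IsPartition Z → ∀ x ∈ Z, x ≠ ⊥ := by
    intro Z hZ x hx heq; exact hZ.2.2 (heq ▸ hx)
  have key : ∀ (Z : Finset A), IsPartition Z → ∀ x : A, x ≠ ⊥ →
      ∀ w ∈ Z, ∀ w' ∈ Z, x ≤ w → x ≤ w' → w = w' := by
    intro Z hZ x hx w hw w' hw' h1 h2
    by_contra hne
    have h := hZ.2.1 w hw w' hw' hne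
    exact hx (le_bot_iff.mp (h ▸ le_inf h1 h2))
  have hvE : ∀ x ∈ E, 0 < v x := fun x hx => hpos x (hbot E hE x hx)
  have hvD : ∀ x ∈ D, 0 < v x := fun x hx => hpos x (hbot D hD x hx)
  have hvJ : ∀ x ∈ J, 0 < v x := fun x hx => hpos x (hbot J hJ x hx)
  refine ⟨?_, ?_, ?_⟩
  · -- (1) E = D
    intro hED
    subst hED
    have hJE : Refines J E :=
      hlub E hE (fun e he => ⟨e, he, le_rfl⟩) (fun e he => ⟨e, he, le_rfl⟩)
    have hmem : ∀ w ∈ J, w ∈ E := by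
      intro w hw
      obtain ⟨e, he, hwe⟩ := hJE w hw
      obtain ⟨x, hx, hxw, _⟩ := (hαJ w hw).1
      have hxe : x = e := key E hE x (hbot E hE x hx) x hx e he le_rfl (hxw.trans hwe)
      subst hxe
      have hwx : w = x := le_antisymm hwe hxw
      exact hwx ▸ hx
    have hupα : ∀ w ∈ J, αJ w = α w := by
      intro w hw
      obtain ⟨x, hx, hxw, heq⟩ := (hαJ w hw).1
      have hxw' : x = w := key E hE x (hbot E hE x hx) x hx w (hmem w hw) le_rfl hxw
      subst hxw'
      rw [heq, mul_div_assoc, div_self (ne_of_gt (hvJ x hw)), mul_one]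
    have hupβ : ∀ w ∈ J, βJ w = β w := by
      intro w hw
      obtain ⟨x, hx, hxw, heq⟩ := (hβJ w hw).1
      have hxw' : x = w := key E hE x (hbot E hE x hx) x hx w (hmem w hw) le_rfl hxw
      subst hxw'
      rw [heq, mul_div_assoc, div_self (ne_of_gt (hvJ x hw)), mul_one]
    constructor
    · intro h e he
      obtain ⟨w, hw, hew⟩ := hEJ e he
      obtain ⟨e', he', hwe'⟩ := hJE w hw
      have hee' : e = e' := key E hE e (hbot E hE e he) e he e' he' le_rfl (hew.trans hwe')
      subst hee'
      have hwe : w = e := le_antisymm hwe' hew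
      have := h w hw
      rwa [hupα w hw, hupβ w hw, hwe] at this
    · intro h w hw
      rw [hupα w hw, hupβ w hw]
      exact h w (hmem w hw)
  · -- (2a) PrefV → ◀
    rintro ⟨hED, hpref⟩ w hw
    obtain ⟨x, hx, hxw, heq⟩ := (hαJ w hw).1
    obtain ⟨d, hd, hxd⟩ := hED x hx
    obtain ⟨w', hw', hdw'⟩ := hDJ d hd
    have hww' : w = w' := key J hJ x (hbot E hE x hx) w hw w' hw' hxw (hxd.trans hdw')
    have hdw : d ≤ w := hww' ▸ hdw'
    have h1 := hpref x hx d hd hxd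
    have h2 := (hβJ w hw).2 d hd hdw
    rw [heq]
    refine le_trans ?_ h2
    rw [div_le_div_iff₀ (hvE x hx) (hvD d hd)]
    have h1' : α x * v d ≤ β d * v x := by
      rw [le_div_iff₀ (hvD d hd)] at h1
      linarith
    nlinarith [mul_le_mul_of_nonneg_right h1' (le_of_lt (hvJ w hw))]
  · -- (2b) ◀ + Refines → PrefV
    intro h hED
    refine ⟨hED, ?_⟩
    intro e he d hd hed
    obtain ⟨w, hw, hew⟩ := hEJ e he
    obtain ⟨w', hw', hdw'⟩ := hDJ d hd
    have hww' : w = w' := key J hJ e (hbot E hE e he) w hw w' hw' hew (hed.trans hdw')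
    have hdw : d ≤ w := hww' ▸ hdw'
    have hJD : Refines J D := hlub D hD hED (fun z hz => ⟨z, hz, le_rfl⟩)
    obtain ⟨d'', hd'', hwd''⟩ := hJD w hw
    have hdd : d = d'' := key D hD d (hbot D hD d hd) d hd d'' hd'' le_rfl (hdw.trans hwd'')
    subst hdd
    have hwd : w = d := le_antisymm hwd'' hdw
    obtain ⟨y, hy, hyw, heqβ⟩ := (hβJ w hw).1
    have hyd : y = d := key D hD y (hbot D hD y hy) y hy d hd le_rfl (hyw.trans hwd.le)
    subst hyd
    have hβval : βJ w = β y := by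
      rw [heqβ, hwd, mul_div_assoc, div_self (ne_of_gt (hvD y hy)), mul_one]
    have h3 := (hαJ w hw).2 e he hew
    have h5 : α e * v w / v e ≤ β y := hβval ▸ (h3.trans (h w hw))
    rw [hwd] at h5
    rw [le_div_iff₀ (hvD y hy)]
    rw [div_le_iff₀ (hvE e he)] at h5
    exact h5
end

section
/- Let 𝒜 be a finite distributive lattice and let E, D be algebraic partitions of 𝒜. Then E ≤ D (E refines D) if and only if [D] ⊆ [E], where [E] = {⋁X : X ⊆ E} is the set of joins of subsets of E. -/
variable {A : Type*} [DistribLattice A] [BoundedOrder A]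

/-- `[E]`, the set of all joins of subsets of `E`. -/
def genBy (E : Finset A) : Set A :=
  {a | ∃ X : Finset A, X ⊆ E ∧ a = X.sup id}

open scoped Classical in
private lemma d_eq_sup_filter (E D : Finset A)
    (hE : IsPartition E) (hD : IsPartition D) (href : Refines E D)
    {d : A} (hd : d ∈ D) : d = (E.filter (· ≤ d)).sup id := by
  apply le_antisymm
  · have h2 : d ≤ E.sup fun e => d ⊓ id e := by
      rw [← Finset.sup_inf_distrib_left, hE.1, inf_top_eq]
    refine h2.trans (Finset.sup_le ?_)
    intro e he
    obtain ⟨d', hd', hed'⟩ := href e he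
    by_cases hdd : d' = d
    · rw [hdd] at hed'
      have : d ⊓ id e = e := inf_eq_right.2 hed'
      rw [this]
      exact Finset.le_sup (f := id) (Finset.mem_filter.2 ⟨he, hed'⟩)
    · have : d ⊓ id e ≤ d ⊓ d' := inf_le_inf_left d hed'
      rw [hD.2.1 d hd d' hd' (Ne.symm hdd)] at this
      exact this.trans bot_le
  · exact Finset.sup_le fun x hx => (Finset.mem_filter.1 hx).2

/-- For partitions `E` and `D`: `E ≤ D` iff `[D] ⊆ [E]`. -/
theorem stmt_17 [Fintype A] (E D : Finset A)
    (hE : IsPartition E) (hD : IsPartition D) :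
    Refines E D ↔ genBy D ⊆ genBy E := by
  classical
  constructor
  · intro href a ⟨Y, hY, ha⟩
    subst ha
    induction Y using Finset.induction with
    | empty => exact ⟨∅, Finset.empty_subset _, rfl⟩
    | @insert d Y' hdY ih =>
      obtain ⟨X, hX, hXeq⟩ := ih (fun x hx => hY (Finset.mem_insert_of_mem hx))
      have hdD : d ∈ D := hY (Finset.mem_insert_self _ _)
      refine ⟨(E.filter (· ≤ d)) ∪ X, Finset.union_subset (Finset.filter_subset _ _) hX, ?_⟩
      classical
      rw [Finset.sup_insert, Finset.sup_union, ← hXeq,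
        ← d_eq_sup_filter E D hE hD href hdD]
      rfl
  · intro hsub e he
    have heb : e ≠ ⊥ := fun h => hE.2.2 (h ▸ he)
    have hne : e ⊓ D.sup id ≠ ⊥ := by rw [hD.1, inf_top_eq]; exact heb
    rw [Finset.sup_inf_distrib_left] at hne
    have : ∃ d ∈ D, e ⊓ d ≠ ⊥ := by
      by_contra hc
      push_neg at hc
      exact hne ((Finset.sup_eq_bot_iff _ _).2 hc)
    obtain ⟨d, hdD, hed⟩ := this
    refine ⟨d, hdD, ?_⟩
    obtain ⟨X, hX, hXeq⟩ := hsub ⟨{d}, Finset.singleton_subset_iff.2 hdD, (Finset.sup_singleton).symm⟩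
    simp only [id_eq] at hXeq
    by_cases heX : e ∈ X
    · rw [hXeq]; exact Finset.le_sup (f := id) heX
    · exfalso
      apply hed
      rw [hXeq, Finset.sup_inf_distrib_left]
      apply (Finset.sup_eq_bot_iff _ _).2
      intro x hx
      exact hE.2.1 e he x (hX hx) (fun h => heX (h ▸ hx))
end

section
/- Let 𝒜 be a finite distributive lattice and let E, D be algebraic partitions of 𝒜. Let S = [E] ∩ [D], and let At(S) be the set of elements a ∈ S with a ≠ 0 such that there is no b ∈ S with 0 < b < a (the atoms of S). Then At(S) is an algebraic partition of 𝒜 and is the least upper bound of E and D in the refinement order: E ≤ At(S), D ≤ At(S), and every partition G with E ≤ G and D ≤ G satisfies At(S) ≤ G. -/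
variable {A : Type*} [DistribLattice A] [BoundedOrder A]

open Classical in
/-- The atoms of a subset `S ⊆ A`: the nonzero `a ∈ S` with no `b ∈ S`
strictly between `⊥` and `a`. -/
noncomputable def atomsOf [Fintype A] (S : Set A) : Finset A :=
  Finset.univ.filter (fun a => a ∈ S ∧ a ≠ ⊥ ∧ ∀ b ∈ S, ⊥ < b → ¬ b < a)

open Classical

lemma mem_atomsOf [Fintype A] {S : Set A} {a : A} :
    a ∈ atomsOf S ↔ a ∈ S ∧ a ≠ ⊥ ∧ ∀ b ∈ S, ⊥ < b → ¬ b < a := by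
  simp [atomsOf]

/-- Key dichotomy: an element of `E` is below or disjoint from any element of `[E]`. -/
lemma le_or_inf_bot {E : Finset A} (hE : ∀ x ∈ E, ∀ y ∈ E, x ≠ y → x ⊓ y = ⊥)
    {e : A} (he : e ∈ E) {s : A} (hs : s ∈ genBy E) : e ≤ s ∨ e ⊓ s = ⊥ := by
  obtain ⟨X, hX, rfl⟩ := hs
  by_cases h : e ∈ X
  · exact Or.inl (Finset.le_sup (f := id) h)
  · right
    rw [Finset.sup_inf_distrib_left]
    refine le_bot_iff.mp (Finset.sup_le fun x hx => ?_)
    exact le_of_eq (hE e he x (hX hx) (fun heq => h (heq ▸ hx)))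

lemma inf_mem_genBy {E : Finset A} (hE : ∀ x ∈ E, ∀ y ∈ E, x ≠ y → x ⊓ y = ⊥)
    {a b : A} (ha : a ∈ genBy E) (hb : b ∈ genBy E) : a ⊓ b ∈ genBy E := by
  obtain ⟨X, hX, rfl⟩ := ha
  obtain ⟨Y, hY, rfl⟩ := hb
  refine ⟨X ∩ Y, (Finset.inter_subset_left).trans hX, le_antisymm ?_ ?_⟩
  · rw [Finset.sup_inf_distrib_right]
    refine Finset.sup_le fun x hx => ?_
    rw [Finset.sup_inf_distrib_left]
    refine Finset.sup_le fun y hy => ?_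
    by_cases hxy : x = y
    · subst hxy
      simpa using Finset.le_sup (f := id) (Finset.mem_inter.mpr ⟨hx, hy⟩)
    · simp [hE x (hX hx) y (hY hy) hxy]
  · exact le_inf (Finset.sup_mono Finset.inter_subset_left)
      (Finset.sup_mono Finset.inter_subset_right)

/-- Elements of `[E]` are complemented inside `[E]`. -/
lemma compl_mem_genBy {E : Finset A} (hE : ∀ x ∈ E, ∀ y ∈ E, x ≠ y → x ⊓ y = ⊥)
    (htop : E.sup id = ⊤) {a : A} (ha : a ∈ genBy E) :
    ∃ c ∈ genBy E, a ⊔ c = ⊤ ∧ a ⊓ c = ⊥ := by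
  obtain ⟨X, hX, rfl⟩ := ha
  refine ⟨(E \ X).sup id, ⟨E \ X, Finset.sdiff_subset, rfl⟩, ?_, ?_⟩
  · rw [← Finset.sup_union, Finset.union_sdiff_of_subset hX, htop]
  · rw [Finset.sup_inf_distrib_right]
    refine le_bot_iff.mp (Finset.sup_le fun x hx => ?_)
    rw [Finset.sup_inf_distrib_left]
    refine Finset.sup_le fun y hy => ?_
    have hyX : y ∉ X := (Finset.mem_sdiff.mp hy).2
    exact le_of_eq (hE x (hX hx) y (Finset.mem_sdiff.mp hy).1
      (fun h => hyX (h ▸ hx)))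

/-- If `g` is below-or-disjoint from each element of `E`, then `g ⊓ a ∈ [E]`
for every `a ∈ [E]`. -/
lemma inf_mem_genBy_of_dichotomy {E : Finset A} {g a : A}
    (h : ∀ x ∈ E, x ≤ g ∨ x ⊓ g = ⊥) (ha : a ∈ genBy E) : g ⊓ a ∈ genBy E := by
  obtain ⟨X, hX, rfl⟩ := ha
  classical
  refine ⟨X.filter (· ≤ g), (Finset.filter_subset _ _).trans hX, le_antisymm ?_ ?_⟩
  · rw [Finset.sup_inf_distrib_left]
    refine Finset.sup_le fun x hx => ?_
    rcases h x (hX hx) with h1 | h1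
    · exact inf_le_right.trans (Finset.le_sup (f := id) (Finset.mem_filter.mpr ⟨hx, h1⟩))
    · rw [inf_comm] at h1; simp [h1]
  · refine Finset.sup_le fun y hy => ?_
    obtain ⟨hyX, hyg⟩ := Finset.mem_filter.mp hy
    exact le_inf hyg (Finset.le_sup (f := id) hyX)

/-- For any partition `E` and any suitable "Boolean" family `S` of elements of `[E]`,
every element of `E` lies below an atom of `S`. -/
lemma exists_atom_above [Fintype A] {E : Finset A} (hE : IsPartition E) (S : Set A)
    (hSsub : S ⊆ genBy E) (hStop : (⊤ : A) ∈ S)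
    (hSinf : ∀ a ∈ S, ∀ b ∈ S, a ⊓ b ∈ S)
    (hScompl : ∀ a ∈ S, ∃ c ∈ S, a ⊔ c = ⊤ ∧ a ⊓ c = ⊥)
    {e : A} (he : e ∈ E) : ∃ m ∈ atomsOf S, e ≤ m := by
  obtain ⟨hEtop, hEdisj, hEbot⟩ := hE
  have hebot : e ≠ ⊥ := fun h => hEbot (h ▸ he)
  set T : Finset A := Finset.univ.filter (fun s => s ∈ S ∧ e ≤ s) with hT
  have htopT : (⊤ : A) ∈ T := by simp [hT, hStop]
  have hTne : T.Nonempty := ⟨⊤, htopT⟩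
  set m : A := T.inf' hTne id with hm
  have hmS : m ∈ S := by
    refine Finset.inf'_mem S (fun x hx y hy => hSinf x hx y hy) T hTne id
      (fun i hi => ?_)
    exact ((Finset.mem_filter.mp hi).2).1
  have hem : e ≤ m := Finset.le_inf' hTne id (fun i hi => ((Finset.mem_filter.mp hi).2).2)
  have hmin : ∀ s ∈ S, e ≤ s → m ≤ s := fun s hs hes =>
    Finset.inf'_le id (by simp [hT, hs, hes])
  refine ⟨m, mem_atomsOf.mpr ⟨hmS, ?_, ?_⟩, hem⟩
  · intro h; exact hebot (le_bot_iff.mp (h ▸ hem))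
  · intro b hb hbpos hblt
    rcases le_or_inf_bot hEdisj he (hSsub hb) with h1 | h1
    · exact absurd (hmin b hb h1) (not_le_of_gt hblt)
    · obtain ⟨c, hcS, hsup, hinf⟩ := hScompl b hb
      have hec : e ≤ c := by
        have : e = (e ⊓ b) ⊔ (e ⊓ c) := by rw [← inf_sup_left, hsup, inf_top_eq]
        rw [h1, bot_sup_eq] at this
        exact this.le.trans inf_le_right
      have : b ≤ c := hblt.le.trans (hmin c hcS hec)
      have : b = ⊥ := le_bot_iff.mp (by rw [← hinf]; exact le_inf le_rfl this)
      exact absurd this (ne_of_gt hbpos)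

/-- `At([E] ∩ [D])` is an algebraic partition of `A` and is the least upper
bound of the partitions `E` and `D` in the refinement order. -/
theorem stmt_18 [Fintype A] (E D : Finset A)
    (hE : IsPartition E) (hD : IsPartition D) :
    IsPartition (atomsOf (genBy E ∩ genBy D)) ∧
    Refines E (atomsOf (genBy E ∩ genBy D)) ∧
    Refines D (atomsOf (genBy E ∩ genBy D)) ∧
    ∀ G : Finset A, IsPartition G → Refines E G → Refines D G →
      Refines (atomsOf (genBy E ∩ genBy D)) G := by
  obtain ⟨hEtop, hEdisj, hEbot⟩ := hE
  obtain ⟨hDtop, hDdisj, hDbot⟩ := hD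
  set S : Set A := genBy E ∩ genBy D with hSdef
  have hStop : (⊤ : A) ∈ S := ⟨⟨E, le_refl _, hEtop.symm⟩, ⟨D, le_refl _, hDtop.symm⟩⟩
  have hSinf : ∀ a ∈ S, ∀ b ∈ S, a ⊓ b ∈ S := fun a ha b hb =>
    ⟨inf_mem_genBy hEdisj ha.1 hb.1, inf_mem_genBy hDdisj ha.2 hb.2⟩
  -- complements in a distributive lattice are unique, so complements stay in S
  have hScompl : ∀ a ∈ S, ∃ c ∈ S, a ⊔ c = ⊤ ∧ a ⊓ c = ⊥ := by
    intro a ha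
    obtain ⟨c, hcE, hc1, hc2⟩ := compl_mem_genBy hEdisj hEtop ha.1
    obtain ⟨c', hcD, hc1', hc2'⟩ := compl_mem_genBy hDdisj hDtop ha.2
    have : c = c' := by
      calc c = c ⊓ (a ⊔ c') := by rw [hc1', inf_top_eq]
        _ = (c ⊓ a) ⊔ (c ⊓ c') := inf_sup_left c a c'
        _ = c ⊓ c' := by rw [inf_comm c a, hc2, bot_sup_eq]
        _ = (c' ⊓ a) ⊔ (c' ⊓ c) := by rw [inf_comm c' a, hc2', bot_sup_eq, inf_comm]
        _ = c' ⊓ (a ⊔ c) := (inf_sup_left c' a c).symm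
        _ = c' := by rw [hc1, inf_top_eq]
    exact ⟨c, ⟨hcE, this ▸ hcD⟩, hc1, hc2⟩
  have hrefE : Refines E (atomsOf S) := fun e he =>
    exists_atom_above ⟨hEtop, hEdisj, hEbot⟩ S Set.inter_subset_left hStop hSinf hScompl he
  have hrefD : Refines D (atomsOf S) := fun d hd =>
    exists_atom_above ⟨hDtop, hDdisj, hDbot⟩ S Set.inter_subset_right hStop hSinf hScompl hd
  refine ⟨⟨?_, ?_, ?_⟩, hrefE, hrefD, ?_⟩
  · -- sup of atoms is ⊤
    refine le_antisymm le_top ?_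
    rw [← hEtop]
    refine Finset.sup_le fun e he => ?_
    obtain ⟨m, hm, hem⟩ := hrefE e he
    exact le_trans hem (Finset.le_sup (f := id) hm)
  · -- disjointness
    intro x hx y hy hxy
    obtain ⟨hxS, hxbot, hxatom⟩ := mem_atomsOf.mp hx
    obtain ⟨hyS, hybot, hyatom⟩ := mem_atomsOf.mp hy
    by_contra h
    have hpos : ⊥ < x ⊓ y := lt_of_le_of_ne bot_le (Ne.symm h)
    have hxyS : x ⊓ y ∈ S := hSinf x hxS y hyS
    have h1 : x ⊓ y = x := by
      by_contra hne
      exact hxatom _ hxyS hpos (lt_of_le_of_ne inf_le_left hne)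
    have h2 : x ⊓ y = y := by
      by_contra hne
      exact hyatom _ hxyS hpos (lt_of_le_of_ne inf_le_right hne)
    exact hxy (h1 ▸ h2)
  · -- ⊥ ∉ atoms
    intro h
    exact (mem_atomsOf.mp h).2.1 rfl
  · -- least upper bound
    intro G hG hEG hDG
    obtain ⟨hGtop, hGdisj, hGbot⟩ := hG
    intro a ha
    obtain ⟨haS, habot, haatom⟩ := mem_atomsOf.mp ha
    have hsum : a = G.sup (fun g => g ⊓ a) := by
      rw [← Finset.sup_inf_distrib_right]
      change a = G.sup id ⊓ a
      rw [hGtop, top_inf_eq]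
    have hex : ∃ g ∈ G, g ⊓ a ≠ ⊥ := by
      by_contra hc
      push_neg at hc
      apply habot
      rw [hsum]
      exact le_bot_iff.mp (Finset.sup_le fun g hg => le_of_eq (hc g hg))
    obtain ⟨g, hgG, hgabot⟩ := hex
    have hdichE : ∀ x ∈ E, x ≤ g ∨ x ⊓ g = ⊥ := by
      intro x hxE
      obtain ⟨g', hg'G, hxg'⟩ := hEG x hxE
      by_cases hgg' : g' = g
      · exact Or.inl (hgg' ▸ hxg')
      · exact Or.inr (le_bot_iff.mp ((inf_le_inf_right g hxg').trans
          (le_of_eq (hGdisj g' hg'G g hgG hgg'))))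
    have hdichD : ∀ x ∈ D, x ≤ g ∨ x ⊓ g = ⊥ := by
      intro x hxD
      obtain ⟨g', hg'G, hxg'⟩ := hDG x hxD
      by_cases hgg' : g' = g
      · exact Or.inl (hgg' ▸ hxg')
      · exact Or.inr (le_bot_iff.mp ((inf_le_inf_right g hxg').trans
          (le_of_eq (hGdisj g' hg'G g hgG hgg'))))
    have hgaS : g ⊓ a ∈ S :=
      ⟨inf_mem_genBy_of_dichotomy hdichE haS.1, inf_mem_genBy_of_dichotomy hdichD haS.2⟩
    have hpos : ⊥ < g ⊓ a := lt_of_le_of_ne bot_le (Ne.symm hgabot)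
    have heq : g ⊓ a = a := by
      by_contra hne
      exact haatom _ hgaS hpos (lt_of_le_of_ne inf_le_right hne)
    exact ⟨g, hgG, heq ▸ inf_le_left⟩
end
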